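/- arXiv:2109.05414 — 2 statements merged into one kernel-verified Lean document; each statement's English description precedes it below -/
import Mathlib

section
/- Let σ = (σ_{i\bar{j}}) be a positive definite diagonal Hermitian n×n matrix and let T_{kq\bar{i}} (for indices 1 ≤ k, q, i ≤ n) be complex numbers symmetric in k and q. Then Σ_{i,k,q} σ^{k\bar{k}}σ^{q\bar{q}}(σ^{i\bar{i}})² |T_{kq\bar{i}}|² ≥ (1/Σ_j σ^{j\bar{j}}) · Σ_k σ^{k\bar{k}} |Σ_i (σ^{i\bar{i}})² T_{ki\bar{i}}|², where σ^{i\bar{i}} = 1/σ_{i\bar{i}}. -/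
/-! Apply the weighted Cauchy–Schwarz inequality `‖∑ wᵢ zᵢ‖² ≤ (∑ wᵢ)(∑ wᵢ ‖zᵢ‖²)` with weights
`σ^{i ī}` to `zᵢ = σ^{i ī} T_{k i ī}`; the resulting bound `∑_{i,k} σ^{k k̄} (σ^{i ī})³ |T_{k i ī}|²`
is the part `q = i` of the left-hand side. -/

open Finset

theorem norm_sum_smul_sq_le {ι E : Type*} [SeminormedAddCommGroup E] [NormedSpace ℝ E]
    (s : Finset ι) {w : ι → ℝ} (hw : ∀ i ∈ s, 0 ≤ w i) (z : ι → E) :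
    ‖∑ i ∈ s, w i • z i‖ ^ 2 ≤ (∑ i ∈ s, w i) * ∑ i ∈ s, w i * ‖z i‖ ^ 2 := by
  have h_triangle : ‖∑ i ∈ s, w i • z i‖ ≤ ∑ i ∈ s, w i * ‖z i‖ :=
    (norm_sum_le _ _).trans <| sum_le_sum fun i hi => by
      rw [norm_smul, Real.norm_of_nonneg (hw i hi)]
  calc ‖∑ i ∈ s, w i • z i‖ ^ 2 ≤ (∑ i ∈ s, w i * ‖z i‖) ^ 2 :=
        pow_le_pow_left₀ (norm_nonneg _) h_triangle 2
    _ ≤ (∑ i ∈ s, w i) * ∑ i ∈ s, w i * ‖z i‖ ^ 2 :=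
      sum_sq_le_sum_mul_sum_of_sq_le_mul s hw
        (fun i hi => mul_nonneg (hw i hi) (sq_nonneg _)) fun i _ => (by ring : _ = _).le

theorem normSq_sum_sq_mul_le {ι : Type*} (s : Finset ι) {w : ι → ℝ} (hw : ∀ i ∈ s, 0 ≤ w i)
    (z : ι → ℂ) :
    Complex.normSq (∑ i ∈ s, (w i : ℂ) ^ 2 * z i) ≤
      (∑ i ∈ s, w i) * ∑ i ∈ s, w i ^ 3 * Complex.normSq (z i) := by
  calc Complex.normSq (∑ i ∈ s, (w i : ℂ) ^ 2 * z i)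
      = ‖∑ i ∈ s, w i • ((w i : ℂ) * z i)‖ ^ 2 := by
        simp only [Complex.normSq_eq_norm_sq, Complex.real_smul, ← mul_assoc, sq]
    _ ≤ (∑ i ∈ s, w i) * ∑ i ∈ s, w i * ‖(w i : ℂ) * z i‖ ^ 2 := norm_sum_smul_sq_le s hw _
    _ = (∑ i ∈ s, w i) * ∑ i ∈ s, w i ^ 3 * Complex.normSq (z i) := by
        congr 1
        refine sum_congr rfl fun i _ => ?_
        rw [norm_mul, Complex.norm_real, Real.norm_eq_abs, mul_pow, sq_abs,
          Complex.normSq_eq_norm_sq]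
        ring

theorem stmt_3_general {n : ℕ} (σ : Fin n → ℝ) (hσ : ∀ i, 0 < σ i)
    (lam : Fin n → ℝ) (hlam : ∀ i, lam i = (σ i)⁻¹)
    (T : Fin n → Fin n → Fin n → ℂ) :
    (∑ i, ∑ k, ∑ q, lam k * lam q * (lam i) ^ 2 * Complex.normSq (T k q i)) ≥
      (∑ j, lam j)⁻¹ *
        ∑ k, lam k * Complex.normSq (∑ i, ((lam i : ℂ)) ^ 2 * T k i i) := by
  set S := ∑ j, lam j
  have hlam_nonneg (i : Fin n) : 0 ≤ lam i := hlam i ▸ (inv_pos.2 (hσ i)).le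
  have hS : 0 ≤ S := sum_nonneg fun j _ => hlam_nonneg j
  have hterm (i k q : Fin n) : 0 ≤ lam k * lam q * lam i ^ 2 * Complex.normSq (T k q i) := by
    have := hlam_nonneg k; have := hlam_nonneg q; have := Complex.normSq_nonneg (T k q i)
    positivity
  calc S⁻¹ * ∑ k, lam k * Complex.normSq (∑ i, ((lam i : ℂ)) ^ 2 * T k i i)
      ≤ S⁻¹ *
          ∑ k, lam k * (S * ∑ i, lam i ^ 3 * Complex.normSq (T k i i)) := by
        gcongr with k
        · exact hlam_nonneg k
        · exact normSq_sum_sq_mul_le _ (fun i _ => hlam_nonneg i) _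
    _ = (S⁻¹ * S) *
          ∑ i, ∑ k, lam k * lam i * lam i ^ 2 * Complex.normSq (T k i i) := by
        simp only [mul_sum]
        rw [sum_comm]
        refine sum_congr rfl fun i _ => sum_congr rfl fun k _ => ?_
        ring
    -- `S⁻¹ * S ≤ 1` holds also for `S = 0`, so the case `n = 0` needs no separate treatment.
    _ ≤ ∑ i, ∑ k, lam k * lam i * lam i ^ 2 * Complex.normSq (T k i i) :=
        mul_le_of_le_one_left (sum_nonneg fun i _ => sum_nonneg fun k _ => hterm i k i)
          (inv_mul_le_one_of_le₀ le_rfl hS)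
    _ ≤ ∑ i, ∑ k, ∑ q, lam k * lam q * lam i ^ 2 * Complex.normSq (T k q i) :=
        sum_le_sum fun i _ => sum_le_sum fun k _ =>
          single_le_sum (f := fun q => lam k * lam q * lam i ^ 2 * Complex.normSq (T k q i))
            (fun q _ => hterm i k q) (mem_univ i)

/-- Cauchy–Schwarz type inequality (Wu–Yau–Zheng) for a diagonal
positive metric `σ` with inverse diagonal entries `lam i = σ^{i ī}` and a tensor
`T` symmetric in its first two indices:
`Σ_{i,k,q} σ^{k k̄} σ^{q q̄} (σ^{i ī})² |T_{k q ī}|²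
  ≥ (1/Σ_j σ^{j j̄}) Σ_k σ^{k k̄} |Σ_i (σ^{i ī})² T_{k i ī}|²`. -/
theorem stmt_3 {n : ℕ} (σ : Fin n → ℝ) (hσ : ∀ i, 0 < σ i)
    (lam : Fin n → ℝ) (hlam : ∀ i, lam i = (σ i)⁻¹)
    (T : Fin n → Fin n → Fin n → ℂ)
    (hTsym : ∀ k q i, T k q i = T q k i) :
    (∑ i, ∑ k, ∑ q, lam k * lam q * (lam i) ^ 2 * Complex.normSq (T k q i)) ≥
      (∑ j, lam j)⁻¹ *
        ∑ k, lam k * Complex.normSq (∑ i, ((lam i : ℂ)) ^ 2 * T k i i) :=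
  stmt_3_general σ hσ lam hlam T
end

section
/- Let R = (R_{i\bar{j}k\bar{l}}) be a tensor on ℂⁿ with Kähler symmetries with respect to a positive definite Hermitian metric h, and suppose the holomorphic sectional curvature satisfies R(v, \bar{v}, v, \bar{v}) ≤ −κ |v|⁴_h for all v ∈ ℂⁿ and some κ > 0. Let σ be another positive definite Hermitian metric. Then Σ σ^{i\bar{j}}σ^{k\bar{l}}R_{i\bar{j}k\bar{l}} ≤ −((n+1)/(2n)) κ (Σ σ^{i\bar{j}}h_{i\bar{j}})². -/
/-!
Choose `E` with `σ⁻¹ = Eᴴ E` such that `E h Eᴴ` is diagonal, with entries `t_a`; then the rows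
`e_a` of `E` are orthonormal for `σ` and `Σ σ^{i j̄} h_{i j̄} = T := Σ t_a`. Average `R(v, v̄, v, v̄)` over the vectors
`v = Σ ζ_a e_a` with independent phases `ζ_a ∈ {1, i, -1, -i}`: only the monomials with
`{a, c} = {b, d}` survive, so by the symmetry `R_{i j̄ k l̄} = R_{k j̄ i l̄}` the average is
`2 S - Σ R(e_a, ē_a, e_a, ē_a)`, where `S` is the left-hand side, while `|v|²_h = T` for every
such `v`. Hence `2 S ≤ -κ T² + Σ R(e_a, ē_a, e_a, ē_a) ≤ -κ T² - κ Σ t_a²`, and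
Cauchy–Schwarz `T² ≤ n Σ t_a²` gives `2 S ≤ -κ (1 + 1/n) T²`.
-/

open ComplexOrder Complex ComplexConjugate Finset Matrix

section

variable {𝕜 : Type*} [RCLike 𝕜] {n : Type*} [Fintype n] [DecidableEq n]
open scoped MatrixOrder

theorem Matrix.PosSemidef.exists_eq_conjTranspose_mul_and_isDiag {A h : Matrix n n 𝕜}
    (hA : A.PosSemidef) (hh : h.IsHermitian) :
    ∃ E : Matrix n n 𝕜, A = Eᴴ * E ∧ (E * h * Eᴴ).IsDiag := by
  set S := CFC.sqrt A
  have hS : S.IsHermitian := (CFC.sqrt_nonneg A).posSemidef.isHermitian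
  have hM : (S * h * S).IsHermitian := by
    simp only [IsHermitian, conjTranspose_mul, hS.eq, hh.eq, mul_assoc]
  have hdiag := hM.conjStarAlgAut_star_eigenvectorUnitary
  rw [Unitary.conjStarAlgAut_star_apply] at hdiag
  set U : Matrix n n 𝕜 := (hM.eigenvectorUnitary : Matrix n n 𝕜)
  refine ⟨star U * S, ?_, ?_⟩
  · rw [conjTranspose_mul, hS.eq, ← star_eq_conjTranspose, star_star, mul_assoc,
      ← mul_assoc U, Unitary.mul_star_self_of_mem hM.eigenvectorUnitary.2, one_mul,
      CFC.sqrt_mul_sqrt_self A hA.nonneg]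
  · rw [conjTranspose_mul, hS.eq, ← star_eq_conjTranspose, star_star,
      show star U * S * h * (S * U) = star U * (S * h * S) * U by noncomm_ring, hdiag]
    exact isDiag_diagonal _
end

lemma sum_comm₄ {M α β : Type*} [AddCommMonoid M] [Fintype α] [Fintype β]
    (f : α → β → β → β → β → M) :
    ∑ x, ∑ i, ∑ j, ∑ k, ∑ l, f x i j k l = ∑ i, ∑ j, ∑ k, ∑ l, ∑ x, f x i j k l := by
  rw [sum_comm]; refine sum_congr rfl fun i _ => ?_
  rw [sum_comm]; refine sum_congr rfl fun j _ => ?_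
  rw [sum_comm]; refine sum_congr rfl fun k _ => ?_
  rw [sum_comm]

lemma sum_swap_first_third {M β : Type*} [AddCommMonoid M] [Fintype β] (f : β → β → β → β → M) :
    ∑ i, ∑ j, ∑ k, ∑ l, f i j k l = ∑ i, ∑ j, ∑ k, ∑ l, f k j i l :=
  calc _ = ∑ i, ∑ k, ∑ j, ∑ l, f i j k l := sum_congr rfl fun _ _ => sum_comm
    _ = ∑ k, ∑ i, ∑ j, ∑ l, f i j k l := sum_comm
    _ = _ := sum_congr rfl fun _ _ => sum_comm

lemma ite_or_eq_add_sub {M : Type*} [AddCommGroup M] (P Q : Prop) [Decidable P] [Decidable Q]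
    (m : M) : (if P ∨ Q then m else 0) =
      (if P then m else 0) + (if Q then m else 0) - (if P ∧ Q then m else 0) := by
  by_cases P <;> by_cases Q <;> simp [*]

/-- Fourth roots of unity suffice as phases: in a monomial `ζ_a ζ̄_b ζ_c ζ̄_d` each coordinate
occurs with total exponent in `[-2, 2]`, which vanishes mod 4 only if it is `0`. -/
noncomputable def phase (x : Fin 4) : ℂ := I ^ (x : ℕ)

lemma phase_mul_conj_self (x : Fin 4) : phase x * conj (phase x) = 1 := by
  simp [phase, ← mul_pow]

lemma sum_phase_ite (p q r s : Prop) [Decidable p] [Decidable q] [Decidable r] [Decidable s] :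
    ∑ x : Fin 4, (if p then phase x else 1) * (if q then conj (phase x) else 1) *
        (if r then phase x else 1) * (if s then conj (phase x) else 1)
      = if ((p ↔ q) ∧ (r ↔ s)) ∨ ((p ↔ s) ∧ (r ↔ q)) then 4 else 0 := by
  by_cases hp : p <;> by_cases hq : q <;> by_cases hr : r <;> by_cases hs : s <;>
    simp [hp, hq, hr, hs, Fin.sum_univ_four, phase, pow_succ] <;> ring

section PhaseAverage

variable {ι : Type*} [Fintype ι] [DecidableEq ι]

lemma sum_phase_mul_conj_mul_mul_conj (a b c d : ι) :
    ∑ ε : ι → Fin 4, phase (ε a) * conj (phase (ε b)) * phase (ε c) * conj (phase (ε d))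
      = if (a = b ∧ c = d) ∨ (a = d ∧ b = c) then 4 ^ Fintype.card ι else 0 := by
  have factor (ε : ι → Fin 4) :
      phase (ε a) * conj (phase (ε b)) * phase (ε c) * conj (phase (ε d))
        = ∏ t, (if t = a then phase (ε t) else 1) * (if t = b then conj (phase (ε t)) else 1) *
            (if t = c then phase (ε t) else 1) * (if t = d then conj (phase (ε t)) else 1) := by
    simp only [prod_mul_distrib, prod_ite_eq', mem_univ, if_true]
  simp_rw [factor, ← Fintype.prod_sum (fun t x => (if t = a then phase x else 1) *
    (if t = b then conj (phase x) else 1) * (if t = c then phase x else 1) *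
    (if t = d then conj (phase x) else 1)), sum_phase_ite, prod_ite_zero, prod_const, card_univ]
  refine if_congr ⟨fun H => ?_, ?_⟩ rfl rfl
  · have := H a (mem_univ _); have := H b (mem_univ _)
    have := H c (mem_univ _); have := H d (mem_univ _)
    grind
  · rintro (⟨rfl, rfl⟩ | ⟨rfl, rfl⟩) t _ <;> simp

lemma sum_phase_fourth_moment (x y z w : ι → ℂ) :
    ∑ ε : ι → Fin 4, (∑ a, phase (ε a) * x a) * conj (∑ a, phase (ε a) * y a) *
        (∑ a, phase (ε a) * z a) * conj (∑ a, phase (ε a) * w a)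
      = 4 ^ Fintype.card ι * ((∑ a, x a * conj (y a)) * (∑ a, z a * conj (w a)) +
          (∑ a, x a * conj (w a)) * (∑ a, z a * conj (y a)) -
          ∑ a, x a * conj (y a) * z a * conj (w a)) := by
  calc _ = ∑ ε : ι → Fin 4, ∑ d, ∑ c, ∑ b, ∑ a,
        (phase (ε a) * conj (phase (ε b)) * phase (ε c) * conj (phase (ε d))) *
          (x a * conj (y b) * z c * conj (w d)) := by
        simp only [map_sum, map_mul, sum_mul, mul_sum]
        refine sum_congr rfl fun _ _ => sum_congr rfl fun _ _ => sum_congr rfl fun _ _ =>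
          sum_congr rfl fun _ _ => sum_congr rfl fun _ _ => by ring
    _ = ∑ d, ∑ c, ∑ b, ∑ a, (if (a = b ∧ c = d) ∨ (a = d ∧ b = c) then 4 ^ Fintype.card ι else 0) *
          (x a * conj (y b) * z c * conj (w d)) := by
        simp only [sum_comm₄, ← sum_mul, sum_phase_mul_conj_mul_mul_conj]
    _ = _ := by
        simp only [ite_or_eq_add_sub, add_mul, sub_mul, sum_add_distrib, sum_sub_distrib, ite_mul,
          zero_mul, ite_and, sum_ite_eq', mem_univ, if_true, sum_ite_irrel, sum_const_zero]
        rw [sum_mul_sum, sum_mul_sum, sum_comm (s := univ) (t := univ)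
          (f := fun a b => x a * conj (y a) * (z b * conj (w b)))]
        simp only [mul_sub, mul_add, mul_sum]
        congr 2 <;> exact sum_congr rfl fun _ _ => sum_congr rfl fun _ _ => by ring

end PhaseAverage

section Forms

variable {ι ν : Type*} [Fintype ι] [Fintype ν]

/-- `quarticForm R v = R(v, v̄, v, v̄)` and `hermForm h v = |v|²_h`. -/
def quarticForm (R : ν → ν → ν → ν → ℂ) (v : ν → ℂ) : ℂ :=
  ∑ i, ∑ j, ∑ k, ∑ l, R i j k l * v i * conj (v j) * v k * conj (v l)

def hermForm (h : Matrix ν ν ℂ) (v : ν → ℂ) : ℂ :=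
  ∑ i, ∑ j, h i j * v i * conj (v j)

lemma hermForm_eq_vecMul_dotProduct (h : Matrix ν ν ℂ) (v : ν → ℂ) :
    hermForm h v = v ᵥ* h ⬝ᵥ star v := by
  simp only [hermForm, vecMul, dotProduct, sum_mul, Pi.star_apply, star_def]
  rw [sum_comm]
  exact sum_congr rfl fun _ _ => sum_congr rfl fun _ _ => by ring

lemma hermForm_vecMul (h : Matrix ν ν ℂ) (E : Matrix ι ν ℂ) (ζ : ι → ℂ) :
    hermForm h (ζ ᵥ* E) = hermForm (E * h * Eᴴ) ζ := by
  rw [hermForm_eq_vecMul_dotProduct, hermForm_eq_vecMul_dotProduct, star_vecMul,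
    dotProduct_mulVec, vecMul_vecMul, vecMul_vecMul, Matrix.mul_assoc]

omit [Fintype ν] in
lemma conjTranspose_mul_self_apply_eq_sum (E : Matrix ι ν ℂ) (i j : ν) :
    (Eᴴ * E) j i = ∑ a, E a i * conj (E a j) := by
  simp [mul_apply, mul_comm]

lemma sum_conjTranspose_mul_self_mul_eq_trace (E : Matrix ι ν ℂ) (h : Matrix ν ν ℂ) :
    ∑ i, ∑ j, (Eᴴ * E) j i * h i j = (E * h * Eᴴ).trace := by
  rw [show ∑ i, ∑ j, (Eᴴ * E) j i * h i j = (h * (Eᴴ * E)).trace by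
    simp [trace, mul_apply, mul_comm], ← Matrix.mul_assoc, trace_mul_cycle]

variable [DecidableEq ι]

lemma hermForm_of_isDiag {D : Matrix ι ι ℂ} (hD : D.IsDiag) {ζ : ι → ℂ}
    (hζ : ∀ a, ζ a * conj (ζ a) = 1) : hermForm D ζ = D.trace := by
  rw [← hD.diagonal_diag]
  simp [hermForm, diagonal_apply, trace, mul_assoc, hζ]

lemma hermForm_row (h : Matrix ν ν ℂ) (E : Matrix ι ν ℂ) (a : ι) :
    hermForm h (E a) = (E * h * Eᴴ) a a := by
  rw [← E.row_apply' a, ← single_one_vecMul, hermForm_vecMul]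
  simp [hermForm, Pi.single_apply]

lemma sum_quarticForm_phase_vecMul (R : ν → ν → ν → ν → ℂ)
    (hR : ∀ i j k l, R i j k l = R k j i l) (E : Matrix ι ν ℂ) :
    ∑ ε : ι → Fin 4, quarticForm R ((phase ∘ ε) ᵥ* E) = 4 ^ Fintype.card ι *
      (2 * ∑ i, ∑ j, ∑ k, ∑ l, (Eᴴ * E) j i * (Eᴴ * E) l k * R i j k l -
        ∑ a, quarticForm R (E a)) := by
  set S := ∑ i, ∑ j, ∑ k, ∑ l, (Eᴴ * E) j i * (Eᴴ * E) l k * R i j k l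
  have hS : ∑ i, ∑ j, ∑ k, ∑ l, R i j k l * ((Eᴴ * E) j i * (Eᴴ * E) l k) = S :=
    sum_congr rfl fun i _ => sum_congr rfl fun j _ => sum_congr rfl fun k _ =>
      sum_congr rfl fun l _ => mul_comm _ _
  have hswap : ∑ i, ∑ j, ∑ k, ∑ l, R i j k l * ((Eᴴ * E) l i * (Eᴴ * E) j k) = S := by
    rw [sum_swap_first_third]
    exact sum_congr rfl fun i _ => sum_congr rfl fun j _ => sum_congr rfl fun k _ =>
      sum_congr rfl fun l _ => by rw [← hR]; ring
  have hdiag : ∑ i, ∑ j, ∑ k, ∑ l, R i j k l * ∑ a, E a i * conj (E a j) * E a k * conj (E a l) =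
      ∑ a, quarticForm R (E a) := by
    simp only [quarticForm, mul_sum, mul_assoc]
    exact (sum_comm₄ _).symm
  calc _ = ∑ i, ∑ j, ∑ k, ∑ l, R i j k l * ∑ ε : ι → Fin 4,
        ((phase ∘ ε) ᵥ* E) i * conj (((phase ∘ ε) ᵥ* E) j) *
          ((phase ∘ ε) ᵥ* E) k * conj (((phase ∘ ε) ᵥ* E) l) := by
        simp only [quarticForm, mul_sum, mul_assoc]
        exact sum_comm₄ _
    _ = 4 ^ Fintype.card ι * ∑ i, ∑ j, ∑ k, ∑ l, R i j k l *
          ((Eᴴ * E) j i * (Eᴴ * E) l k + (Eᴴ * E) l i * (Eᴴ * E) j k -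
            ∑ a, E a i * conj (E a j) * E a k * conj (E a l)) := by
        simp only [vecMul, dotProduct, Function.comp_apply, sum_phase_fourth_moment,
          conjTranspose_mul_self_apply_eq_sum, mul_left_comm _ (4 ^ Fintype.card ι : ℂ), ← mul_sum]
    _ = _ := by
        simp only [mul_add, mul_sub, sum_add_distrib, sum_sub_distrib, hS, hswap, hdiag]
        ring

lemma two_mul_re_sub_le_of_forall_phase (R : ν → ν → ν → ν → ℂ)
    (hR : ∀ i j k l, R i j k l = R k j i l) (E : Matrix ι ν ℂ) {c : ℝ}
    (hc : ∀ ε : ι → Fin 4, (quarticForm R ((phase ∘ ε) ᵥ* E)).re ≤ c) :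
    2 * (∑ i, ∑ j, ∑ k, ∑ l, (Eᴴ * E) j i * (Eᴴ * E) l k * R i j k l).re -
      ∑ a, (quarticForm R (E a)).re ≤ c := by
  have hsum := sum_le_sum fun ε (_ : ε ∈ univ) => hc ε
  rw [← re_sum, sum_quarticForm_phase_vecMul R hR E, sum_const, card_univ, Fintype.card_fun,
    Fintype.card_fin, nsmul_eq_mul, show (4 : ℂ) ^ Fintype.card ι = ((4 ^ Fintype.card ι : ℝ) : ℂ)
      by push_cast; rfl, re_ofReal_mul] at hsum
  push_cast at hsum
  simpa [re_sum] using le_of_mul_le_mul_left hsum (by positivity)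

lemma two_mul_re_sum_le_of_isDiag {R : ν → ν → ν → ν → ℂ}
    (hR : ∀ i j k l, R i j k l = R k j i l) {h : Matrix ν ν ℂ} {κ : ℝ}
    (hHSC : ∀ v, (quarticForm R v).re ≤ -κ * (hermForm h v).re ^ 2)
    {E : Matrix ι ν ℂ} (hD : (E * h * Eᴴ).IsDiag) :
    2 * (∑ i, ∑ j, ∑ k, ∑ l, (Eᴴ * E) j i * (Eᴴ * E) l k * R i j k l).re ≤
      -κ * (∑ a, ((E * h * Eᴴ) a a).re) ^ 2 - κ * ∑ a, ((E * h * Eᴴ) a a).re ^ 2 := by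
  have hphase (ε : ι → Fin 4) :
      (quarticForm R ((phase ∘ ε) ᵥ* E)).re ≤ -κ * (∑ a, ((E * h * Eᴴ) a a).re) ^ 2 := by
    have := hHSC ((phase ∘ ε) ᵥ* E)
    rwa [hermForm_vecMul, hermForm_of_isDiag hD (ζ := phase ∘ ε)
      fun a => phase_mul_conj_self (ε a), trace, re_sum] at this
  have hrows : ∑ a, (quarticForm R (E a)).re ≤ ∑ a, -κ * ((E * h * Eᴴ) a a).re ^ 2 :=
    sum_le_sum fun a _ => by simpa only [hermForm_row] using hHSC (E a)
  rw [← mul_sum] at hrows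
  linarith [two_mul_re_sub_le_of_forall_phase R hR E hphase]

end Forms

lemma le_neg_mul_sq_sum_of_two_mul_le {ι : Type*} [Fintype ι] (hι : 0 < Fintype.card ι)
    {κ s : ℝ} (hκ : 0 ≤ κ) (t : ι → ℝ) (hs : 2 * s ≤ -κ * (∑ a, t a) ^ 2 - κ * ∑ a, t a ^ 2) :
    s ≤ -((Fintype.card ι + 1 : ℝ) / (2 * Fintype.card ι)) * κ * (∑ a, t a) ^ 2 := by
  have hCS : (∑ a, t a) ^ 2 / Fintype.card ι ≤ ∑ a, t a ^ 2 := by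
    rw [div_le_iff₀' (by exact_mod_cast hι)]
    simpa using sq_sum_le_card_mul_sum_sq (s := univ) (f := t)
  calc s ≤ (-κ * (∑ a, t a) ^ 2 - κ * ((∑ a, t a) ^ 2 / Fintype.card ι)) / 2 := by
        nlinarith
    _ = _ := by field_simp; ring

theorem stmt_12_general {n : ℕ} (hn : 0 < n)
    (h σ : Matrix (Fin n) (Fin n) ℂ)
    (hh : h.PosDef) (hσ : σ.PosDef)
    (R : Fin n → Fin n → Fin n → Fin n → ℂ)
    (hsym1 : ∀ i j k l, R i j k l = R k j i l)
    (κ : ℝ) (hκ : 0 < κ)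
    (hHSC : ∀ v : Fin n → ℂ,
      (∑ i, ∑ j, ∑ k, ∑ l,
          R i j k l * v i * starRingEnd ℂ (v j) * v k * starRingEnd ℂ (v l)).re ≤
        -κ * ((∑ i, ∑ j, h i j * v i * starRingEnd ℂ (v j)).re) ^ 2) :
    (∑ i, ∑ j, ∑ k, ∑ l, σ⁻¹ j i * σ⁻¹ l k * R i j k l).re ≤
      -((n + 1 : ℝ) / (2 * n)) * κ *
        ((∑ i, ∑ j, σ⁻¹ j i * h i j).re) ^ 2 := by
  obtain ⟨E, hσE, hD⟩ :=
    hσ.inv.posSemidef.exists_eq_conjTranspose_mul_and_isDiag hh.isHermitian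
  rw [hσE, sum_conjTranspose_mul_self_mul_eq_trace, trace, re_sum]
  simpa using le_neg_mul_sq_sum_of_two_mul_le (by simpa using hn) hκ.le _
    (two_mul_re_sum_le_of_isDiag (h := h) hsym1 hHSC hD)

/-- (Royden's lemma.)  Let `R` be a Kähler-type curvature tensor
on `ℂⁿ` with respect to a positive definite Hermitian metric `h`, whose holomorphic
sectional curvature satisfies `R(v,v̄,v,v̄) ≤ −κ |v|⁴_h` for all `v`.  Then for any
positive definite Hermitian metric `σ`,
`Σ σ^{i j̄} σ^{k l̄} R_{i j̄ k l̄} ≤ −((n+1)/(2n)) κ (Σ σ^{i j̄} h_{i j̄})²`. -/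
theorem stmt_12 {n : ℕ} (hn : 0 < n)
    (h σ : Matrix (Fin n) (Fin n) ℂ)
    (hh : h.PosDef) (hσ : σ.PosDef)
    (R : Fin n → Fin n → Fin n → Fin n → ℂ)
    (hsym1 : ∀ i j k l, R i j k l = R k j i l)
    (hsym2 : ∀ i j k l, R i j k l = R i l k j)
    (hherm : ∀ i j k l, R i j k l = starRingEnd ℂ (R j i l k))
    (κ : ℝ) (hκ : 0 < κ)
    (hHSC : ∀ v : Fin n → ℂ,
      (∑ i, ∑ j, ∑ k, ∑ l,
          R i j k l * v i * starRingEnd ℂ (v j) * v k * starRingEnd ℂ (v l)).re ≤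
        -κ * ((∑ i, ∑ j, h i j * v i * starRingEnd ℂ (v j)).re) ^ 2) :
    (∑ i, ∑ j, ∑ k, ∑ l, σ⁻¹ j i * σ⁻¹ l k * R i j k l).re ≤
      -((n + 1 : ℝ) / (2 * n)) * κ *
        ((∑ i, ∑ j, σ⁻¹ j i * h i j).re) ^ 2 :=
  stmt_12_general hn h σ hh hσ R hsym1 κ hκ hHSC
end
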